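/- Let n be a natural number and let ρ, σ be density matrices of size n×n over ℂ (positive semidefinite with trace 1). Then Tr(√(√ρ · σ · √ρ)) equals the sum, over the multiset of roots z of the characteristic polynomial of ρ·σ counted with multiplicity, of Real.sqrt (Re z) (coerced to ℂ). Consequently the quantum fidelity satisfies F(ρ,σ) = Tr(√(√ρ σ √ρ))² = (Σᵢ √λᵢ(ρσ))², where λᵢ(ρσ) are the eigenvalues of ρσ. -/

import Mathlib

/-!
The matrices `ρσ = √ρ (√ρ σ)` and `(√ρ σ) √ρ = √ρ σ √ρ` have the same characteristic polynomial.
The latter is positive semidefinite, so its characteristic polynomial splits with roots its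
(nonnegative) eigenvalues `λᵢ`, while the trace of its square root is `∑ᵢ √λᵢ`.
-/

open scoped ComplexOrder

namespace Matrix.PosSemidef
variable {n : Type*} [Fintype n] [DecidableEq n] {𝕜 : Type*} [RCLike 𝕜] {A : Matrix n n 𝕜}
noncomputable def sqrt (hA : A.PosSemidef) : Matrix n n 𝕜 :=
  hA.1.eigenvectorUnitary.1 * Matrix.diagonal ((↑) ∘ (√·) ∘ hA.1.eigenvalues) *
    (star hA.1.eigenvectorUnitary : Matrix n n 𝕜)
lemma posSemidef_sqrt (hA : A.PosSemidef) : PosSemidef hA.sqrt := by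
  apply PosSemidef.mul_mul_conjTranspose_same
  refine posSemidef_diagonal_iff.mpr fun i ↦ ?_
  rw [Function.comp_apply, RCLike.nonneg_iff]
  constructor
  · simp only [RCLike.ofReal_re]
    exact Real.sqrt_nonneg _
  · simp only [RCLike.ofReal_im]
end Matrix.PosSemidef

/-- `√ρ * σ * √ρ` is positive semidefinite whenever `ρ` and `σ` are. -/
noncomputable def sandwichPosSemidef {n : ℕ} {ρ σ : Matrix (Fin n) (Fin n) ℂ}
    (hρ : ρ.PosSemidef) (hσ : σ.PosSemidef) :
    (hρ.sqrt * σ * hρ.sqrt).PosSemidef := by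
  have h := hσ.conjTranspose_mul_mul_same hρ.sqrt
  rwa [hρ.posSemidef_sqrt.isHermitian.eq] at h

/-- Quantum fidelity `F(ρ,σ) = Tr(√(√ρ σ √ρ))²`. -/
noncomputable def fidelity {n : ℕ} {ρ σ : Matrix (Fin n) (Fin n) ℂ}
    (hρ : ρ.PosSemidef) (hσ : σ.PosSemidef) : ℂ :=
  (sandwichPosSemidef hρ hσ).sqrt.trace ^ 2

namespace Matrix.PosSemidef

variable {n : Type*} [Fintype n] [DecidableEq n] {𝕜 : Type*} [RCLike 𝕜] {A : Matrix n n 𝕜}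

lemma sqrt_mul_self (hA : A.PosSemidef) : hA.sqrt * hA.sqrt = A := by
  have hU : (star hA.1.eigenvectorUnitary : Matrix n n 𝕜) * hA.1.eigenvectorUnitary.1 = 1 :=
    Unitary.star_mul_self_of_mem hA.1.eigenvectorUnitary.2
  conv_rhs => rw [hA.1.spectral_theorem, Unitary.conjStarAlgAut_apply]
  simp only [sqrt, Matrix.mul_assoc]
  rw [← Matrix.mul_assoc (star _), hU, Matrix.one_mul, ← Matrix.mul_assoc (diagonal _),
    diagonal_mul_diagonal]
  congr 3
  funext i
  simp only [Function.comp_apply]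
  rw [← RCLike.ofReal_mul, Real.mul_self_sqrt (hA.eigenvalues_nonneg i)]

lemma trace_sqrt (hA : A.PosSemidef) : hA.sqrt.trace = ∑ i, (√(hA.1.eigenvalues i) : 𝕜) := by
  have hU : (star hA.1.eigenvectorUnitary : Matrix n n 𝕜) * hA.1.eigenvectorUnitary.1 = 1 :=
    Unitary.star_mul_self_of_mem hA.1.eigenvectorUnitary.2
  rw [sqrt, trace_mul_cycle, hU, Matrix.one_mul, trace_diagonal]
  rfl

lemma trace_sqrt_eq_sum_roots_charpoly (hA : A.PosSemidef) :
    hA.sqrt.trace = (A.charpoly.roots.map fun z => (√(RCLike.re z) : 𝕜)).sum := by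
  rw [hA.trace_sqrt, hA.1.roots_charpoly_eq_eigenvalues, Multiset.map_map]
  simp only [Finset.sum_eq_multiset_sum, Function.comp_def, RCLike.ofReal_re]

lemma charpoly_mul_eq_charpoly_sqrt_mul_mul_sqrt (hA : A.PosSemidef) (B : Matrix n n 𝕜) :
    (A * B).charpoly = (hA.sqrt * B * hA.sqrt).charpoly := by
  conv_lhs => rw [← hA.sqrt_mul_self, Matrix.mul_assoc]
  exact charpoly_mul_comm _ _

end Matrix.PosSemidef

theorem trace_sqrt_sandwich_eq_sum_sqrt_eigenvalues_general (n : ℕ) (ρ σ : Matrix (Fin n) (Fin n) ℂ)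
    (hρ : ρ.PosSemidef) (hσ : σ.PosSemidef) :
    (sandwichPosSemidef hρ hσ).sqrt.trace =
      (((ρ * σ).charpoly.roots).map (fun z => (Real.sqrt z.re : ℂ))).sum ∧
    fidelity hρ hσ =
      (((ρ * σ).charpoly.roots).map (fun z => (Real.sqrt z.re : ℂ))).sum ^ 2 := by
  have htrace : (sandwichPosSemidef hρ hσ).sqrt.trace =
      (((ρ * σ).charpoly.roots).map (fun z => (Real.sqrt z.re : ℂ))).sum := by
    rw [hρ.charpoly_mul_eq_charpoly_sqrt_mul_mul_sqrt σ]
    exact (sandwichPosSemidef hρ hσ).trace_sqrt_eq_sum_roots_charpoly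
  exact ⟨htrace, by rw [fidelity, htrace]⟩

/-- For density matrices `ρ`, `σ`, the trace of `√(√ρ σ √ρ)` equals the sum of the square roots
of the eigenvalues of `ρσ` (roots of its characteristic polynomial, with multiplicity);
consequently `F(ρ,σ) = (Σᵢ √λᵢ(ρσ))²`. -/
theorem trace_sqrt_sandwich_eq_sum_sqrt_eigenvalues (n : ℕ) (ρ σ : Matrix (Fin n) (Fin n) ℂ)
    (hρ : ρ.PosSemidef) (hσ : σ.PosSemidef) (hρ1 : ρ.trace = 1) (hσ1 : σ.trace = 1) :
    (sandwichPosSemidef hρ hσ).sqrt.trace =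
      (((ρ * σ).charpoly.roots).map (fun z => (Real.sqrt z.re : ℂ))).sum ∧
    fidelity hρ hσ =
      (((ρ * σ).charpoly.roots).map (fun z => (Real.sqrt z.re : ℂ))).sum ^ 2 :=
  trace_sqrt_sandwich_eq_sum_sqrt_eigenvalues_general n ρ σ hρ hσ
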